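/- Suppose an M×N real matrix Φ satisfies the RIP of order K+1 with isometry constant δ < 1/(3√K), and let x ∈ ℝ^N be nonzero with ‖x‖₀ ≤ K. Then the first identification step of Orthogonal Matching Pursuit succeeds: for h⁰ = Φᵀ Φ x, there exists j ∈ supp(x) with |h⁰(j)| strictly larger than |h⁰(j')| for every j' ∉ supp(x); in particular every index maximizing |h⁰(j)| lies in supp(x). -/

import Mathlib

noncomputable section

namespace OMP

open Matrix Finset

/-- The support of a vector, as a `Finset`. -/
def supp {n : ℕ} (x : Fin n → ℝ) : Finset (Fin n) :=
  Finset.univ.filter fun j => x j ≠ 0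

/-- The Euclidean (ℓ²) norm of a vector. -/
def l2 {n : ℕ} (x : Fin n → ℝ) : ℝ := Real.sqrt (∑ j, x j ^ 2)

/-- The ℓ^∞ norm of a vector. -/
def linf {n : ℕ} (x : Fin n → ℝ) : ℝ := ⨆ j, |x j|

/-- The standard inner product of two vectors. -/
def dotp {n : ℕ} (x y : Fin n → ℝ) : ℝ := ∑ j, x j * y j

/-- The restriction of a vector to a set of indices (zero elsewhere). -/
def restr {n : ℕ} (Γ : Finset (Fin n)) (x : Fin n → ℝ) : Fin n → ℝ :=
  fun j => if j ∈ Γ then x j else 0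

/-- The restricted isometry property of order `K` with isometry constant `δ`. -/
def RIP {M N : ℕ} (K : ℕ) (Φ : Matrix (Fin M) (Fin N) ℝ) (δ : ℝ) : Prop :=
  0 < δ ∧ δ < 1 ∧ ∀ x : Fin N → ℝ, (supp x).card ≤ K →
    (1 - δ) * l2 x ^ 2 ≤ l2 (Φ.mulVec x) ^ 2 ∧
      l2 (Φ.mulVec x) ^ 2 ≤ (1 + δ) * l2 x ^ 2

/-- The span of the columns of `Φ` indexed by `Λ`, as a submodule of Euclidean space. -/
def colSpan {M N : ℕ} (Φ : Matrix (Fin M) (Fin N) ℝ) (Λ : Finset (Fin N)) :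
    Submodule ℝ (EuclideanSpace ℝ (Fin M)) :=
  Submodule.span ℝ ((fun j => (WithLp.equiv 2 (Fin M → ℝ)).symm fun i => Φ i j) '' (Λ : Set (Fin N)))

/-- Orthogonal projection `P_Λ` onto the span of the columns of `Φ` indexed by `Λ`. -/
def projCol {M N : ℕ} (Φ : Matrix (Fin M) (Fin N) ℝ) (Λ : Finset (Fin N))
    (v : Fin M → ℝ) : Fin M → ℝ :=
  WithLp.equiv 2 (Fin M → ℝ)
    (Submodule.orthogonalProjectionOnto (colSpan Φ Λ) ((WithLp.equiv 2 (Fin M → ℝ)).symm v) : EuclideanSpace ℝ (Fin M))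

/-- The matrix `A_Λ = (I - P_Λ) Φ`: the columns of `Φ` orthogonalized against `colSpan Φ Λ`. -/
def Amat {M N : ℕ} (Φ : Matrix (Fin M) (Fin N) ℝ) (Λ : Finset (Fin N)) :
    Matrix (Fin M) (Fin N) ℝ :=
  Matrix.of fun i j => Φ i j - projCol Φ Λ (fun i' => Φ i' j) i

/-! Off the support of `x`, the entry `(ΦᵀΦx) j` is, up to the factor `‖x‖`, the inner product
`⟨Φu, Φx⟩` with `u = ‖x‖ e_j`. Since `u` and `x` have disjoint supports and equal norms,
`u ± x` both have squared norm `2‖x‖²`, and polarization with the RIP bounds on `‖Φ(u ± x)‖²`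
gives `|(ΦᵀΦx) j| ≤ δ‖x‖`. On the support, with `j` maximizing `|(ΦᵀΦx) j|` there,
`(1 - δ)‖x‖² ≤ ⟨ΦᵀΦx, x⟩ ≤ |(ΦᵀΦx) j| · ‖x‖₁ ≤ |(ΦᵀΦx) j| · √K ‖x‖`,
and `δ < 1/(3√K)` forces `δ√K < 1 - δ`. -/

section Vectors

variable {n : ℕ}

lemma mem_supp {x : Fin n → ℝ} {j : Fin n} : j ∈ supp x ↔ x j ≠ 0 := by
  simp [supp]

lemma supp_nonempty {x : Fin n → ℝ} : (supp x).Nonempty ↔ x ≠ 0 := by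
  simp [Finset.Nonempty, mem_supp, funext_iff]

lemma supp_single_subset (j : Fin n) (a : ℝ) : supp (Pi.single j a) ⊆ {j} := fun k hk => by
  by_contra hkj
  exact mem_supp.1 hk (Pi.single_eq_of_ne (Finset.notMem_singleton.1 hkj) _)

lemma supp_add_subset (x y : Fin n → ℝ) : supp (x + y) ⊆ supp x ∪ supp y := fun j hj => by
  by_contra hxy
  simp only [Finset.mem_union, mem_supp, not_or, not_not] at hxy
  exact mem_supp.1 hj (by simp [hxy])

lemma supp_sub_subset (x y : Fin n → ℝ) : supp (x - y) ⊆ supp x ∪ supp y := by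
  simpa only [sub_eq_add_neg, supp, neg_ne_zero, Pi.neg_apply] using supp_add_subset x (-y)

lemma sum_supp {x : Fin n → ℝ} {f : Fin n → ℝ} (hf : ∀ j, x j = 0 → f j = 0) :
    ∑ j ∈ supp x, f j = ∑ j, f j :=
  Finset.sum_filter_of_ne fun j _ hfj hxj => hfj (hf j hxj)

lemma dotProduct_eq_zero_of_disjoint_supp {x y : Fin n → ℝ} (h : Disjoint (supp x) (supp y)) :
    x ⬝ᵥ y = 0 :=
  Finset.sum_eq_zero fun j _ => by
    by_contra hxy
    exact Finset.disjoint_left.1 h (mem_supp.2 (left_ne_zero_of_mul hxy))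
      (mem_supp.2 (right_ne_zero_of_mul hxy))

lemma l2_nonneg (x : Fin n → ℝ) : 0 ≤ l2 x := Real.sqrt_nonneg _

lemma l2_sq (x : Fin n → ℝ) : l2 x ^ 2 = x ⬝ᵥ x := by
  rw [l2, Real.sq_sqrt (by positivity)]
  simp only [dotProduct, sq]

lemma l2_pos {x : Fin n → ℝ} (hx : x ≠ 0) : 0 < l2 x := by
  obtain ⟨j, hj⟩ := supp_nonempty.2 hx
  refine Real.sqrt_pos.2 (lt_of_lt_of_le ?_ (Finset.single_le_sum (fun k _ => sq_nonneg (x k))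
    (Finset.mem_univ j)))
  have hxj := mem_supp.1 hj
  positivity

lemma l2_single (j : Fin n) (a : ℝ) : l2 (Pi.single j a) = |a| := by
  rw [← Real.sqrt_sq_eq_abs, ← Real.sqrt_sq (l2_nonneg _), l2_sq, dotProduct_single,
    Pi.single_eq_same, sq]

lemma l2_add_sq (x y : Fin n → ℝ) : l2 (x + y) ^ 2 = l2 x ^ 2 + 2 * (x ⬝ᵥ y) + l2 y ^ 2 := by
  simp only [l2_sq, add_dotProduct, dotProduct_add, dotProduct_comm y x]
  ring

lemma l2_sub_sq (x y : Fin n → ℝ) : l2 (x - y) ^ 2 = l2 x ^ 2 - 2 * (x ⬝ᵥ y) + l2 y ^ 2 := by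
  simp only [l2_sq, sub_dotProduct, dotProduct_sub, dotProduct_comm y x]
  ring

lemma sum_abs_le_sqrt_card_mul_l2 (x : Fin n → ℝ) :
    ∑ j ∈ supp x, |x j| ≤ √(supp x).card * l2 x := by
  rw [← Real.sqrt_sq (Finset.sum_nonneg fun j _ => abs_nonneg (x j)), l2,
    ← Real.sqrt_mul (Nat.cast_nonneg _)]
  refine Real.sqrt_le_sqrt (sq_sum_le_card_mul_sum_sq.trans_eq ?_)
  simp only [sq_abs]
  rw [sum_supp fun j hj => by simp [hj]]

lemma dotProduct_le_mul_sum_abs {h x : Fin n → ℝ} {m : ℝ} (hm : ∀ j ∈ supp x, |h j| ≤ m) :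
    h ⬝ᵥ x ≤ m * ∑ j ∈ supp x, |x j| := by
  rw [dotProduct, ← sum_supp (x := x) (f := fun j => h j * x j) fun j hj => by rw [hj, mul_zero],
    Finset.mul_sum]
  refine Finset.sum_le_sum fun j hj => ?_
  calc h j * x j ≤ |h j| * |x j| := (le_abs_self _).trans (abs_mul _ _).le
    _ ≤ m * |x j| := mul_le_mul_of_nonneg_right (hm j hj) (abs_nonneg _)

end Vectors

lemma transpose_mulVec_dotProduct {M N : ℕ} (Φ : Matrix (Fin M) (Fin N) ℝ) (w : Fin M → ℝ)
    (y : Fin N → ℝ) : (Φᵀ *ᵥ w) ⬝ᵥ y = w ⬝ᵥ (Φ *ᵥ y) := by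
  rw [mulVec_transpose, dotProduct_mulVec]

namespace RIP

variable {M N s : ℕ} {Φ : Matrix (Fin M) (Fin N) ℝ} {δ : ℝ}

lemma one_sub_mul_l2_sq_le (hΦ : RIP s Φ δ) {x : Fin N → ℝ} (hx : (supp x).card ≤ s) :
    (1 - δ) * l2 x ^ 2 ≤ (Φᵀ *ᵥ (Φ *ᵥ x)) ⬝ᵥ x := by
  rw [transpose_mulVec_dotProduct, ← l2_sq]
  exact (hΦ.2.2 x hx).1

lemma abs_dotProduct_mulVec_le (hΦ : RIP s Φ δ) {u v : Fin N → ℝ}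
    (hdisj : Disjoint (supp u) (supp v)) (hcard : (supp u ∪ supp v).card ≤ s)
    (huv : l2 u = l2 v) : |(Φ *ᵥ u) ⬝ᵥ (Φ *ᵥ v)| ≤ δ * l2 u ^ 2 := by
  have horth := dotProduct_eq_zero_of_disjoint_supp hdisj
  have hadd := hΦ.2.2 (u + v) ((Finset.card_le_card (supp_add_subset u v)).trans hcard)
  have hsub := hΦ.2.2 (u - v) ((Finset.card_le_card (supp_sub_subset u v)).trans hcard)
  rw [mulVec_add, l2_add_sq, l2_add_sq] at hadd
  rw [mulVec_sub, l2_sub_sq, l2_sub_sq] at hsub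
  rw [horth, ← huv] at hadd hsub
  rw [abs_le]
  constructor <;> linarith

lemma abs_gram_mulVec_apply_le {K : ℕ} (hΦ : RIP (K + 1) Φ δ) {x : Fin N → ℝ}
    (hx : (supp x).card ≤ K) {j : Fin N} (hj : j ∉ supp x) :
    |(Φᵀ *ᵥ (Φ *ᵥ x)) j| ≤ δ * l2 x := by
  rcases eq_or_ne x 0 with rfl | hx0
  · simp [mulVec_zero, l2]
  have hc := l2_pos hx0
  set u : Fin N → ℝ := Pi.single j (l2 x)
  have hu : l2 u = l2 x := by rw [l2_single, abs_of_pos hc]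
  have hdisj : Disjoint (supp u) (supp x) :=
    Finset.disjoint_of_subset_left (supp_single_subset j _) (Finset.disjoint_singleton_left.2 hj)
  have hcard : (supp u ∪ supp x).card ≤ K + 1 := by
    have hu1 : (supp u).card ≤ 1 :=
      (Finset.card_le_card (supp_single_subset j _)).trans_eq (Finset.card_singleton j)
    exact (Finset.card_union_le _ _).trans (by omega)
  have hdot : (Φ *ᵥ u) ⬝ᵥ (Φ *ᵥ x) = (Φᵀ *ᵥ (Φ *ᵥ x)) j * l2 x := by
    rw [dotProduct_comm, ← transpose_mulVec_dotProduct, dotProduct_single]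
  have key := hΦ.abs_dotProduct_mulVec_le hdisj hcard hu
  rw [hdot, hu, abs_mul, abs_of_pos hc, sq, ← mul_assoc] at key
  exact le_of_mul_le_mul_right key hc

end RIP

lemma mul_sqrt_lt_one_sub {δ K : ℝ} (hδ0 : 0 < δ) (hK : 1 ≤ K) (hδ : δ < 1 / (3 * √K)) :
    δ * √K < 1 - δ := by
  have hsK : 1 ≤ √K := Real.one_le_sqrt.2 hK
  have h3 : δ * √K < 1 / 3 := by
    rw [lt_div_iff₀ (by positivity)] at hδ
    linarith
  nlinarith

/-- the first identification step of OMP succeeds. -/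
theorem stmt5 {M N K : ℕ} (Φ : Matrix (Fin M) (Fin N) ℝ) (δ : ℝ) (x : Fin N → ℝ)
    (hRIP : RIP (K + 1) Φ δ) (hδ : δ < 1 / (3 * Real.sqrt K))
    (hx : x ≠ 0) (hsp : (supp x).card ≤ K)
    (h0 : Fin N → ℝ) (hh : h0 = Φᵀ.mulVec (Φ.mulVec x)) :
    ∃ j ∈ supp x, ∀ j' ∉ supp x, |h0 j'| < |h0 j| := by
  have hS := supp_nonempty.2 hx
  obtain ⟨j, hj, hmax⟩ := (supp x).exists_max_image (fun j => |h0 j|) hS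
  refine ⟨j, hj, fun j' hj' => (hh ▸ hRIP.abs_gram_mulVec_apply_le hsp hj').trans_lt ?_⟩
  have hc := l2_pos hx
  have hK : (1 : ℝ) ≤ K := by exact_mod_cast (Finset.card_pos.2 hS).trans_le hsp
  have hupper : (1 - δ) * l2 x ^ 2 ≤ |h0 j| * (√(K : ℝ) * l2 x) :=
    calc (1 - δ) * l2 x ^ 2 ≤ h0 ⬝ᵥ x := hh ▸ hRIP.one_sub_mul_l2_sq_le (hsp.trans K.le_succ)
      _ ≤ |h0 j| * ∑ k ∈ supp x, |x k| := dotProduct_le_mul_sum_abs hmax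
      _ ≤ |h0 j| * (√(K : ℝ) * l2 x) := by
          gcongr
          exact (sum_abs_le_sqrt_card_mul_l2 x).trans (by gcongr)
  have hlt : δ * l2 x * (√(K : ℝ) * l2 x) < |h0 j| * (√(K : ℝ) * l2 x) :=
    calc δ * l2 x * (√(K : ℝ) * l2 x) = δ * √(K : ℝ) * l2 x ^ 2 := by ring
      _ < (1 - δ) * l2 x ^ 2 := by gcongr; exact mul_sqrt_lt_one_sub hRIP.1 hK hδ
      _ ≤ |h0 j| * (√(K : ℝ) * l2 x) := hupper
  exact lt_of_mul_lt_mul_right hlt (by positivity)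

end OMP
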